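/- arXiv:1207.7198 — 4 statements merged into one kernel-verified Lean document; each statement's English description precedes it below -/
import Mathlib

section
/- Let P > 0 and let p : ℝ → ℝ² be continuously differentiable, satisfying p(x+P) = p(x) + (P,0) for all x ∈ ℝ and having constant speed |p'(x)| = ℓ_p/P for all x, where ℓ_p = ∫₀^P |p'(x)| dx. If p is not injective, then there exist real numbers a < b with p(a) = p(b) and (b − a)·(ℓ_p/P) ≤ ℓ_p − P; that is, the curve contains a closed loop whose arc length is no greater than ℓ_p − P. -/
open Complex

lemma re_pos_of_close {w v : ℂ} (hv : v ≠ 0) (hclose : ‖w - v‖ < ‖v‖) :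
    0 < (w / v).re := by
  have hq : ‖w / v - 1‖ < 1 := by
    have : w / v - 1 = (w - v) / v := by field_simp
    rw [this, norm_div]
    rw [div_lt_one (norm_pos_iff.mpr hv)]
    exact hclose
  have h1 : |(w / v).re - 1| ≤ ‖w / v - 1‖ := by
    have := Complex.abs_re_le_norm (w / v - 1)
    simpa using this
  have : |(w / v).re - 1| < 1 := lt_of_le_of_lt h1 hq
  have := abs_lt.mp this
  linarith [this.1]

-- continuous nonvanishing map on convex compact set has continuous argument lift
lemma exists_arg_lift {K : Set (ℝ × ℝ)} (hKconv : Convex ℝ K) (hKc : IsCompact K)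
    {z₀ : ℝ × ℝ} (hz₀ : z₀ ∈ K)
    {F : ℝ × ℝ → ℂ} (hF : ContinuousOn F K) (hF0 : ∀ z ∈ K, F z ≠ 0) :
    ∃ θ : ℝ × ℝ → ℝ, ContinuousOn θ K ∧
      ∀ z ∈ K, F z = (‖F z‖ : ℂ) * Complex.exp (θ z * Complex.I) := by
  classical
  -- minimum of |F| on K
  obtain ⟨zm, hzm, hmin⟩ := hKc.exists_isMinOn ⟨z₀, hz₀⟩ (continuous_norm.comp_continuousOn hF)
  set ε : ℝ := ‖F zm‖ with hε
  have hεpos : 0 < ε := norm_pos_iff.mpr (hF0 zm hzm)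
  have hεle : ∀ z ∈ K, ε ≤ ‖F z‖ := fun z hz => isMinOn_iff.mp hmin z hz
  -- uniform continuity
  have hUC : UniformContinuousOn F K := hKc.uniformContinuousOn_of_continuous hF
  rw [Metric.uniformContinuousOn_iff] at hUC
  obtain ⟨δ, hδpos, hδ⟩ := hUC ε hεpos
  -- bound on K
  obtain ⟨R, hR⟩ := hKc.isBounded.subset_closedBall z₀
  -- choose n with (max R 0) / n < δ
  obtain ⟨n, hn⟩ := exists_nat_gt (max R 0 / δ)
  have hnpos : 0 < (n:ℝ) := lt_of_le_of_lt (by positivity) hn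
  -- the subdivision points
  set c : ℕ → (ℝ × ℝ) → (ℝ × ℝ) := fun k z => z₀ + ((k : ℝ)/(n : ℝ)) • (z - z₀) with hc
  have hcK : ∀ k : ℕ, k ≤ n → ∀ z ∈ K, c k z ∈ K := by
    intro k hk z hz
    have h01 : (0:ℝ) ≤ (k:ℝ)/(n:ℝ) ∧ (k:ℝ)/(n:ℝ) ≤ 1 := by
      constructor
      · positivity
      · rw [div_le_one hnpos]; exact_mod_cast hk
    have := hKconv hz₀ hz (a := 1 - (k:ℝ)/(n:ℝ)) (b := (k:ℝ)/(n:ℝ))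
      (by linarith [h01.2]) h01.1 (by ring)
    convert this using 1
    simp only [hc]
    module
  have hc0 : ∀ z, c 0 z = z₀ := by intro z; simp [hc]
  have hcn : ∀ z, c n z = z := by
    intro z
    simp only [hc]
    rw [div_self (ne_of_gt hnpos)]
    module
  have hcstep : ∀ k : ℕ, ∀ z ∈ K, dist (c (k+1) z) (c k z) < δ := by
    intro k z hz
    have : c (k+1) z - c k z = ((1:ℝ)/(n:ℝ)) • (z - z₀) := by
      simp only [hc]
      have : ((k:ℝ)+1)/(n:ℝ) = (k:ℝ)/(n:ℝ) + 1/(n:ℝ) := by ring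
      push_cast
      rw [this]
      module
    rw [dist_eq_norm, this]
    rw [norm_smul]
    have hzb : ‖z - z₀‖ ≤ max R 0 := by
      have := hR hz
      rw [Metric.mem_closedBall, dist_eq_norm] at this
      exact le_trans this (le_max_left _ _)
    have h1n : ‖(1:ℝ)/(n:ℝ)‖ = 1/(n:ℝ) := by
      rw [Real.norm_eq_abs, abs_of_pos (by positivity)]
    rw [h1n]
    calc 1/(n:ℝ) * ‖z - z₀‖ ≤ 1/(n:ℝ) * max R 0 := by
          apply mul_le_mul_of_nonneg_left hzb (by positivity)
      _ < δ := by
          rw [div_mul_eq_mul_div, one_mul, div_lt_iff₀ hnpos]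
          have := (div_lt_iff₀ hδpos).mp hn
          nlinarith
  -- continuity and closeness of consecutive values
  have hFc : ∀ k : ℕ, k ≤ n → ContinuousOn (fun z => F (c k z)) K := by
    intro k hk
    apply hF.comp
    · apply ContinuousOn.add continuousOn_const
      fun_prop
    · intro z hz; exact hcK k hk z hz
  have hquot : ∀ k : ℕ, k + 1 ≤ n → ∀ z ∈ K,
      0 < (F (c (k+1) z) / F (c k z)).re := by
    intro k hk z hz
    apply re_pos_of_close (hF0 _ (hcK k (by omega) z hz))
    calc ‖F (c (k+1) z) - F (c k z)‖
        = dist (F (c (k+1) z)) (F (c k z)) := by rw [Complex.dist_eq]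
      _ < ε := hδ _ (hcK (k+1) hk z hz) _ (hcK k (by omega) z hz) (hcstep k z hz)
      _ ≤ ‖F (c k z)‖ := hεle _ (hcK k (by omega) z hz)
  -- define θ
  set θ : (ℝ × ℝ) → ℝ := fun z =>
    (F z₀).arg + ∑ k ∈ Finset.range n, (F (c (k+1) z) / F (c k z)).arg with hθ
  refine ⟨θ, ?_, ?_⟩
  · -- continuity
    apply ContinuousOn.add continuousOn_const
    apply continuousOn_finset_sum
    intro k hk
    rw [Finset.mem_range] at hk
    have hk1 : k + 1 ≤ n := hk
    have hcont : ContinuousOn (fun z => F (c (k+1) z) / F (c k z)) K :=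
      (hFc (k+1) hk1).div (hFc k (by omega)) (fun z hz => hF0 _ (hcK k (by omega) z hz))
    intro z hz
    have harg : ContinuousAt Complex.arg (F (c (k+1) z) / F (c k z)) := by
      apply Complex.continuousAt_arg
      exact Or.inl (hquot k hk1 z hz)
    exact ContinuousAt.comp_continuousWithinAt (g := Complex.arg)
      (f := fun z => F (c (k+1) z) / F (c k z)) (x := z) harg (hcont z hz)
  · -- the exp property: by induction on partial sums
    intro z hz
    have key : ∀ m : ℕ, m ≤ n →
        F (c m z) = (‖F (c m z)‖ : ℂ) *
          Complex.exp (Complex.ofReal ((F z₀).arg + ∑ k ∈ Finset.range m, (F (c (k+1) z) / F (c k z)).arg) * Complex.I) := by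
      intro m
      induction m with
      | zero =>
          intro _
          rw [hc0 z]
          simp only [Finset.range_zero, Finset.sum_empty, add_zero]
          exact (Complex.norm_mul_exp_arg_mul_I _).symm
      | succ m ih =>
          intro hm
          have hmn : m ≤ n := by omega
          have ihm := ih hmn
          have hne : F (c m z) ≠ 0 := hF0 _ (hcK m hmn z hz)
          rw [Finset.sum_range_succ]
          generalize hS : ((F z₀).arg + ∑ k ∈ Finset.range m, (F (c (k+1) z) / F (c k z)).arg) = S at ihm ⊢
          generalize hA : F (c m z) = A at *
          generalize hB : F (c (m+1) z) = B at *
          have hqarg : (B / A) = (‖B / A‖ : ℂ) * Complex.exp (Complex.ofReal ((B / A).arg) * Complex.I) :=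
            (Complex.norm_mul_exp_arg_mul_I _).symm
          have habs : (‖B‖ : ℂ) = (‖B / A‖ : ℂ) * (‖A‖ : ℂ) := by
            rw [← Complex.ofReal_mul, ← norm_mul, div_mul_cancel₀ B hne]
          have hofr : Complex.ofReal (S + (B / A).arg) = Complex.ofReal S + Complex.ofReal ((B / A).arg) :=
            Complex.ofReal_add _ _
          calc B = (B / A) * A := by field_simp
            _ = ((‖B / A‖ : ℂ) * Complex.exp (Complex.ofReal ((B / A).arg) * Complex.I)) *
                ((‖A‖ : ℂ) * Complex.exp (Complex.ofReal S * Complex.I)) := by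
                rw [← hqarg, ← ihm]
            _ = ((‖B / A‖ : ℂ) * (‖A‖ : ℂ)) *
                Complex.exp (Complex.ofReal (S + (B / A).arg) * Complex.I) := by
                rw [hofr, add_mul, Complex.exp_add]
                ring
            _ = (‖B‖ : ℂ) * Complex.exp (Complex.ofReal (S + (B / A).arg) * Complex.I) := by
                rw [habs]
            _ = (‖B‖ : ℂ) * Complex.exp (Complex.ofReal ((F z₀).arg +
                  (∑ k ∈ Finset.range m, (F (c (k+1) z) / F (c k z)).arg + (B / A).arg)) * Complex.I) := by
                rw [← add_assoc, hS]
    have := key n le_rfl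
    rw [hcn] at this
    exact this


-- a continuous function taking values in c·ℤ on an interval is constant
lemma discrete_const {a b : ℝ} (hab : a ≤ b) {f : ℝ → ℝ} (hf : ContinuousOn f (Set.Icc a b))
    {c : ℝ} (hc : 0 < c) (hval : ∀ t ∈ Set.Icc a b, ∃ m : ℤ, f t = c * m) :
    f b = f a := by
  obtain ⟨m₀, hm₀⟩ := hval a ⟨le_refl a, hab⟩
  obtain ⟨m₁, hm₁⟩ := hval b ⟨hab, le_refl b⟩
  rw [hm₀, hm₁]
  by_contra hne
  have hmne : m₀ ≠ m₁ := by
    intro h; apply hne; rw [h]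
  rcases lt_or_gt_of_ne hmne with h | h
  · -- m₀ < m₁ : the value c*m₀ + c/2 is attained
    have hv : c * m₀ + c/2 ∈ Set.Icc (f a) (f b) := by
      rw [hm₀, hm₁]
      constructor
      · linarith
      · have : (m₀ : ℝ) + 1 ≤ m₁ := by exact_mod_cast h
        nlinarith
    have := intermediate_value_Icc hab hf hv
    obtain ⟨s, hs, hfs⟩ := this
    obtain ⟨m', hm'⟩ := hval s hs
    rw [hm'] at hfs
    have : (2 * (m' - m₀) : ℝ) = 1 := by
      push_cast
      nlinarith
    have h2 : ((2 * (m' - m₀) : ℤ) : ℝ) = 1 := by push_cast; linarith [this]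
    have : (2 * (m' - m₀) : ℤ) = 1 := by exact_mod_cast h2
    omega
  · have hv : c * m₁ + c/2 ∈ Set.Icc (f b) (f a) := by
      rw [hm₀, hm₁]
      constructor
      · linarith
      · have : (m₁ : ℝ) + 1 ≤ m₀ := by exact_mod_cast h
        nlinarith
    have := intermediate_value_Icc' hab hf hv
    obtain ⟨s, hs, hfs⟩ := this
    obtain ⟨m', hm'⟩ := hval s hs
    rw [hm'] at hfs
    have : (2 * (m' - m₁) : ℝ) = 1 := by
      push_cast
      nlinarith
    have h2 : ((2 * (m' - m₁) : ℤ) : ℝ) = 1 := by push_cast; linarith [this]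
    have : (2 * (m' - m₁) : ℤ) = 1 := by exact_mod_cast h2
    omega

-- exp((u)I) = exp((v)I) implies u - v ∈ 2πℤ
lemma angle_diff {u v : ℝ} (h : Complex.exp (u * Complex.I) = Complex.exp (v * Complex.I)) :
    ∃ m : ℤ, u - v = 2 * Real.pi * m := by
  have h1 : Complex.exp (((u : ℂ) - (v : ℂ)) * Complex.I) = 1 := by
    rw [sub_mul, Complex.exp_sub, h, div_self (Complex.exp_ne_zero _)]
  rw [Complex.exp_eq_one_iff] at h1
  obtain ⟨n, hn⟩ := h1
  refine ⟨n, ?_⟩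
  have h2 : ((u - v : ℝ) : ℂ) = ((2 * Real.pi * n : ℝ) : ℂ) := by
    push_cast
    have hIne : (Complex.I : ℂ) ≠ 0 := Complex.I_ne_zero
    apply mul_right_cancel₀ hIne
    rw [hn]
    ring
  exact_mod_cast h2

-- The triangle lemma: no continuous nonvanishing map on the closed triangle
-- {(a,b) | x ≤ b ≤ a ≤ y} with constant diagonal and antisymmetric edges.
lemma triangle_lemma {x y : ℝ} (hxy : x < y) {F : ℝ × ℝ → ℂ}
    (hFcont : ContinuousOn F {z : ℝ × ℝ | x ≤ z.2 ∧ z.2 ≤ z.1 ∧ z.1 ≤ y})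
    (hF0 : ∀ z ∈ {z : ℝ × ℝ | x ≤ z.2 ∧ z.2 ≤ z.1 ∧ z.1 ≤ y}, F z ≠ 0)
    (hdiag : ∀ t ∈ Set.Icc x y, F (t, t) = F (x, x))
    (hanti : ∀ t ∈ Set.Icc x y, F (y, t) = - F (t, x)) : False := by
  set T : Set (ℝ × ℝ) := {z : ℝ × ℝ | x ≤ z.2 ∧ z.2 ≤ z.1 ∧ z.1 ≤ y} with hT
  have hπ : (0:ℝ) < Real.pi := Real.pi_pos
  -- membership facts
  have hmem1 : ∀ t ∈ Set.Icc x y, ((t, x) : ℝ × ℝ) ∈ T := by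
    intro t ht; exact ⟨le_refl x, ht.1, ht.2⟩
  have hmem2 : ∀ t ∈ Set.Icc x y, ((y, t) : ℝ × ℝ) ∈ T := by
    intro t ht; exact ⟨ht.1, ht.2, le_refl y⟩
  have hmem3 : ∀ t ∈ Set.Icc x y, ((t, t) : ℝ × ℝ) ∈ T := by
    intro t ht; exact ⟨ht.1, le_refl t, ht.2⟩
  have hxxT : ((x, x) : ℝ × ℝ) ∈ T := ⟨le_refl x, le_refl x, hxy.le⟩
  -- convexity
  have hconv : Convex ℝ T := by
    intro z hz w hw a b ha hb hab
    obtain ⟨h1, h2, h3⟩ := hz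
    obtain ⟨h4, h5, h6⟩ := hw
    have hxx : a * x + b * x = x := by rw [← add_mul, hab, one_mul]
    have hyy : a * y + b * y = y := by rw [← add_mul, hab, one_mul]
    refine ⟨?_, ?_, ?_⟩ <;>
      simp only [Prod.fst_add, Prod.snd_add, Prod.smul_fst, Prod.smul_snd, smul_eq_mul] <;>
      linarith [mul_le_mul_of_nonneg_left h1 ha, mul_le_mul_of_nonneg_left h4 hb,
        mul_le_mul_of_nonneg_left h2 ha, mul_le_mul_of_nonneg_left h5 hb,
        mul_le_mul_of_nonneg_left h3 ha, mul_le_mul_of_nonneg_left h6 hb]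
  -- compactness
  have hcomp : IsCompact T := by
    apply IsCompact.of_isClosed_subset (IsCompact.prod isCompact_Icc isCompact_Icc)
    · apply IsClosed.inter
      · exact isClosed_le continuous_const continuous_snd
      apply IsClosed.inter
      · exact isClosed_le continuous_snd continuous_fst
      · exact isClosed_le continuous_fst continuous_const
    · rintro ⟨a, b⟩ ⟨h1, h2, h3⟩
      exact ⟨⟨le_trans h1 h2, h3⟩, ⟨h1, le_trans h2 h3⟩⟩
  -- get the lift
  obtain ⟨θ, hθcont, hθ⟩ := exists_arg_lift hconv hcomp hxxT hFcont hF0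
  -- unit form: exp(θ z * I) = F z / |F z|
  have hunit : ∀ z ∈ T, Complex.exp (θ z * Complex.I) = F z / (‖F z‖ : ℂ) := by
    intro z hz
    have h0 : (‖F z‖ : ℂ) ≠ 0 := by
      simpa using (norm_ne_zero_iff.mpr (hF0 z hz))
    field_simp [h0]
    rw [mul_comm]
    exact (hθ z hz).symm
  -- the three boundary functions
  set φ : ℝ → ℝ := fun t => θ (t, x) with hφ
  set ψ : ℝ → ℝ := fun t => θ (y, t) with hψ
  set d : ℝ → ℝ := fun t => θ (t, t) with hd
  have hφc : ContinuousOn φ (Set.Icc x y) := by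
    apply hθcont.comp
    · exact (continuous_id.prodMk continuous_const).continuousOn
    · intro t ht; exact hmem1 t ht
  have hψc : ContinuousOn ψ (Set.Icc x y) := by
    apply hθcont.comp
    · exact (continuous_const.prodMk continuous_id).continuousOn
    · intro t ht; exact hmem2 t ht
  have hdc : ContinuousOn d (Set.Icc x y) := by
    apply hθcont.comp
    · exact (continuous_id.prodMk continuous_id).continuousOn
    · intro t ht; exact hmem3 t ht
  -- (a) d is constant
  have hdconst : d y = d x := by
    have h := discrete_const (f := fun t => d t - d x) hxy.le
      (hdc.sub continuousOn_const) (by positivity : (0:ℝ) < 2 * Real.pi) ?_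
    · have hh : d y - d x = d x - d x := h
      linarith
    · intro t ht
      have e1 : Complex.exp (d t * Complex.I) = Complex.exp (d x * Complex.I) := by
        rw [hunit _ (hmem3 t ht), hunit _ (hmem3 x ⟨le_refl x, hxy.le⟩)]
        rw [hdiag t ht]
      obtain ⟨m, hm⟩ := angle_diff e1
      exact ⟨m, by simpa using hm⟩
  -- (b) ψ - φ - π is constant
  have hρconst : (ψ y - φ y - Real.pi) = (ψ x - φ x - Real.pi) := by
    have h := discrete_const (f := fun t => ψ t - φ t - Real.pi) hxy.le
      ((hψc.sub hφc).sub continuousOn_const) (by positivity : (0:ℝ) < 2 * Real.pi) ?_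
    · simpa using h
    intro t ht
    have e1 : Complex.exp (ψ t * Complex.I) = Complex.exp (Complex.ofReal (φ t + Real.pi) * Complex.I) := by
      rw [hunit _ (hmem2 t ht)]
      rw [hanti t ht]
      rw [Complex.ofReal_add, add_mul, Complex.exp_add, Complex.exp_pi_mul_I]
      rw [hunit _ (hmem1 t ht)]
      have habs : ‖- F (t, x)‖ = ‖F (t, x)‖ :=
        norm_neg _
      rw [habs]
      field_simp
    obtain ⟨m, hm⟩ := angle_diff e1
    refine ⟨m, by show ψ t - φ t - Real.pi = 2 * Real.pi * (m:ℝ); linarith [hm]⟩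
  -- corner identities
  have c1 : φ x = d x := rfl
  have c2 : ψ x = φ y := rfl
  have c3 : ψ y = d y := rfl
  -- conclude: φ y = φ x
  have hφyx : φ y = φ x := by
    have h1 : ψ y = φ x := by rw [c3, hdconst, ← c1]
    have h2 : ψ x = φ y := c2
    -- hρconst : ψ y - φ y - π = ψ x - φ x - π
    rw [h1, h2] at hρconst
    linarith [hρconst]
  -- final contradiction: ψ x - φ x - π = -π must be in 2πℤ
  have e1 : Complex.exp (ψ x * Complex.I) = Complex.exp (Complex.ofReal (φ x + Real.pi) * Complex.I) := by
    have hxmem : x ∈ Set.Icc x y := ⟨le_refl x, hxy.le⟩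
    rw [hunit _ (hmem2 x hxmem)]
    rw [hanti x hxmem]
    rw [Complex.ofReal_add, add_mul, Complex.exp_add, Complex.exp_pi_mul_I]
    rw [hunit _ (hmem1 x hxmem)]
    have habs : ‖- F (x, x)‖ = ‖F (x, x)‖ :=
      norm_neg _
    rw [habs]
    field_simp
  obtain ⟨m, hm⟩ := angle_diff e1
  -- hm : ψ x - (φ x + π) = 2πm ; but ψ x = φ y = φ x
  rw [c2, hφyx] at hm
  -- -π = 2πm
  have : Real.pi * (2 * m + 1) = 0 := by push_cast; linarith [hm]
  have h2m : (2 * (m:ℝ) + 1) = 0 := by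
    rcases mul_eq_zero.mp this with h | h
    · exact absurd h (ne_of_gt hπ)
    · exact h
  have : ((2 * m + 1 : ℤ) : ℝ) = 0 := by push_cast; linarith
  have : (2 * m + 1 : ℤ) = 0 := by exact_mod_cast this
  omega


section MainSec

variable {P : ℝ} {q : ℝ → ℂ}

lemma even_step (hP : 0 < P) (hq : Continuous q)
    {i : ℤ} (hi : i ≠ 0) {x y : ℝ} (hxy : x < y)
    (heq : q y = q x + ((2 * i : ℤ) : ℂ) * (P : ℂ)) :
    ∃ a b : ℝ, x ≤ b ∧ b < a ∧ a ≤ y ∧ q a = q b + (i : ℂ) * (P : ℂ) := by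
  by_contra hno
  push_neg at hno
  have hiP : ((i : ℂ) * (P : ℂ)) ≠ 0 := by
    apply mul_ne_zero
    · exact_mod_cast hi
    · exact_mod_cast (ne_of_gt hP)
  apply triangle_lemma hxy (F := fun z : ℝ × ℝ => q z.1 - q z.2 - (i : ℂ) * (P : ℂ))
  · apply ContinuousOn.sub
    apply ContinuousOn.sub
    · exact (hq.comp continuous_fst).continuousOn
    · exact (hq.comp continuous_snd).continuousOn
    · exact continuousOn_const
  · rintro ⟨a, b⟩ ⟨h1, h2, h3⟩ hF0
    simp only at hF0 h1 h2 h3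
    have heqab : q a = q b + (i : ℂ) * (P : ℂ) := by
      rw [← sub_eq_zero]
      rw [← hF0]
      ring
    rcases eq_or_lt_of_le h2 with heq2 | hlt
    · -- a = b : then iP = 0, contradiction
      rw [heq2] at heqab
      apply hiP
      linear_combination -heqab
    · exact hno a b h1 hlt h3 heqab
  · intro t _
    simp only
    ring
  · intro t _
    simp only
    rw [heq]
    push_cast
    ring

lemma key_induction (hP : 0 < P) (hq : Continuous q)
    (hper : ∀ x : ℝ, q (x + P) = q x + P) :
    ∀ (N : ℕ) (j : ℤ), (2 * j.natAbs + (if j < 0 then 1 else 0)) = N →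
    ∀ x y : ℝ, x < y → y - x < P → q y = q x + (j : ℂ) * (P : ℂ) →
    ∃ a b : ℝ, a < b ∧ b - a < P ∧ q a = q b := by
  intro N
  induction N using Nat.strong_induction_on with
  | _ N ih =>
    intro j hjN x y hxy hw heq
    by_cases hj0 : j = 0
    · refine ⟨x, y, hxy, hw, ?_⟩
      rw [heq, hj0]
      simp
    by_cases hj1 : j = 1
    · refine ⟨y, x + P, by linarith, by linarith, ?_⟩
      rw [hper x, heq, hj1]
      push_cast
      ring
    rcases Int.even_or_odd j with ⟨i, hi2⟩ | ⟨i, hi2⟩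
    · -- even case : j = i + i = 2i
      have hij : j = 2 * i := by omega
      have hine : i ≠ 0 := by omega
      obtain ⟨a, b, hb, hba, ha, heqab⟩ := even_step hP hq hine hxy
        (by rw [heq, hij])
      have hm : (2 * i.natAbs + (if i < 0 then 1 else 0)) < N := by
        subst hjN
        rcases lt_or_ge i 0 with h | h <;> rcases lt_or_ge j 0 with h' | h' <;>
          simp only [if_pos, if_neg, h, h', not_lt] <;> omega
      exact ih _ hm i rfl b a hba (by linarith) heqab
    · -- odd case : j = 2i + 1
      have hij : j = 2 * i + 1 := by omega
      have hine : i ≠ 0 := by omega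
      -- twin pair : (y - P, x) with offset 1 - j = 2 * (-i)
      have htwin : q x = q (y - P) + ((2 * (-i) : ℤ) : ℂ) * (P : ℂ) := by
        have h1 : q ((y - P) + P) = q (y - P) + P := hper (y - P)
        rw [show (y - P) + P = y by ring] at h1
        rw [heq] at h1
        -- h1 : q x + j P = q (y - P) + P
        rw [hij] at h1
        push_cast at h1 ⊢
        linear_combination h1
      obtain ⟨a, b, hb, hba, ha, heqab⟩ := even_step hP hq (by omega : (-i : ℤ) ≠ 0)
        (by linarith : y - P < x) htwin
      have hm : (2 * (-i : ℤ).natAbs + (if (-i : ℤ) < 0 then 1 else 0)) < N := by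
        subst hjN
        rcases lt_or_ge (-i : ℤ) 0 with h | h <;> rcases lt_or_ge j 0 with h' | h' <;>
          simp only [if_pos, if_neg, h, h', not_lt] <;> omega
      exact ih _ hm (-i) rfl b a hba (by linarith) heqab

lemma exists_small_gap (hP : 0 < P) (hq : Continuous q)
    (hper : ∀ x : ℝ, q (x + P) = q x + P)
    {x₀ y₀ : ℝ} (hne : x₀ ≠ y₀) (heq0 : q x₀ = q y₀) :
    ∃ a b : ℝ, a < b ∧ b - a < P ∧ q a = q b := by
  -- wlog x₀ < y₀
  wlog hlt : x₀ < y₀ generalizing x₀ y₀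
  · exact this hne.symm heq0.symm (by rcases lt_or_gt_of_ne hne with h | h; exact absurd h hlt; exact h)
  -- integer periodicity
  have hperZ : ∀ (k : ℤ) (x : ℝ), q (x + (k : ℝ) * P) = q x + (((k : ℝ) * P : ℝ) : ℂ) := by
    intro k
    induction k using Int.induction_on with
    | zero => intro x; simp
    | succ n ihn =>
        intro x
        push_cast
        have ih' := ihn x
        push_cast at ih'
        rw [show x + ((n : ℝ) + 1) * P = (x + (n : ℝ) * P) + P by ring]
        rw [hper, ih']
        push_cast
        ring
    | pred n ihn =>
        intro x
        push_cast
        have h1 := hper (x + (-(n:ℝ) - 1) * P)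
        rw [show (x + (-(n:ℝ) - 1) * P) + P = x + (-(n:ℝ)) * P by ring] at h1
        have h2 := ihn x
        push_cast at h2
        rw [h2] at h1
        push_cast at h1
        linear_combination -h1
  -- reduce the window below P using the floor
  set r : ℝ := (y₀ - x₀) / P with hr
  set k : ℤ := ⌊r⌋ with hk
  have hrpos : 0 < r := div_pos (by linarith) hP
  have hk0 : 0 ≤ k := Int.floor_nonneg.mpr hrpos.le
  have hfl : (k : ℝ) ≤ r := Int.floor_le r
  have hfu : r < k + 1 := Int.lt_floor_add_one r
  set z : ℝ := x₀ + (k : ℝ) * P with hz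
  have hzy : z ≤ y₀ := by
    have : (k : ℝ) * P ≤ y₀ - x₀ := by
      have := mul_le_mul_of_nonneg_right hfl hP.le
      rwa [hr, div_mul_cancel₀ _ (ne_of_gt hP)] at this
    linarith
  have hwin : y₀ - z < P := by
    have : y₀ - x₀ < ((k : ℝ) + 1) * P := by
      have := mul_lt_mul_of_pos_right hfu hP
      rwa [hr, div_mul_cancel₀ _ (ne_of_gt hP)] at this
    simp only [hz]
    nlinarith
  have hqz : q z = q x₀ + (((k : ℝ) * P : ℝ) : ℂ) := hperZ k x₀
  have hzy' : z < y₀ := by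
    rcases eq_or_lt_of_le hzy with hzeq | h
    · exfalso
      rw [hzeq] at hqz
      rw [← heq0] at hqz
      have hkP : ((k : ℝ) * P : ℂ) = 0 := by
        have := hqz
        push_cast at this ⊢
        linear_combination -this
      have hkP' : (k : ℝ) * P = 0 := by exact_mod_cast hkP
      have hkz : (k : ℝ) = 0 := by
        rcases mul_eq_zero.mp hkP' with h | h
        · exact h
        · exact absurd h (ne_of_gt hP)
      have : z = x₀ := by rw [hz, hkz]; ring
      rw [← hzeq, this] at hlt
      exact lt_irrefl _ hlt
    · exact h
  have hpair : q y₀ = q z + ((-k : ℤ) : ℂ) * (P : ℂ) := by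
    rw [hqz, ← heq0]
    push_cast
    ring
  exact key_induction hP hq hper _ (-k) rfl z y₀ hzy' (by linarith) hpair

end MainSec


open MeasureTheory intervalIntegral

/-- A non-injective periodic constant-speed `C¹` plane curve contains a closed loop
whose arc length is at most `ℓ_p − P`. -/
theorem stmt_1
    (P : ℝ) (hP : 0 < P)
    (p p' : ℝ → EuclideanSpace ℝ (Fin 2))
    (hderiv : ∀ x, HasDerivAt p (p' x) x)
    (hcont : Continuous p')
    (hper : ∀ x : ℝ, p (x + P) = p x + (EuclideanSpace.equiv (Fin 2) ℝ).symm ![P, 0])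
    (hspeed : ∀ x : ℝ, ‖p' x‖ = (∫ t in (0:ℝ)..P, ‖p' t‖) / P)
    (hninj : ¬ Function.Injective p) :
    ∃ a b : ℝ, a < b ∧ p a = p b ∧
      (b - a) * ((∫ t in (0:ℝ)..P, ‖p' t‖) / P) ≤ (∫ t in (0:ℝ)..P, ‖p' t‖) - P := by
  set ℓ : ℝ := ∫ t in (0:ℝ)..P, ‖p' t‖ with hℓ
  set v : ℝ := ℓ / P with hv
  -- the translation vector has norm P
  have hw : ‖(EuclideanSpace.equiv (Fin 2) ℝ).symm ![P, 0]‖ = P := by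
    rw [EuclideanSpace.norm_eq]
    have : ∀ i : Fin 2, ‖(EuclideanSpace.equiv (Fin 2) ℝ).symm ![P, 0] i‖ ^ 2
        = (![P, 0] i) ^ 2 := by
      intro i
      simp [Real.norm_eq_abs, sq_abs]
    rw [Fin.sum_univ_two]
    simp only [this]
    simp [Matrix.cons_val_zero, Matrix.cons_val_one]
    rw [Real.sqrt_sq hP.le]
  -- chord length is at most arc length = (t - s) * v
  have chord : ∀ s t : ℝ, s ≤ t → ‖p t - p s‖ ≤ (t - s) * v := by
    intro s t hst
    have hint : ∀ u : ℝ, u ∈ Set.uIcc s t → HasDerivAt p (p' u) u := fun u _ => hderiv u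
    have hic : IntervalIntegrable p' volume s t := hcont.intervalIntegrable s t
    have hftc : ∫ u in s..t, p' u = p t - p s :=
      intervalIntegral.integral_eq_sub_of_hasDerivAt hint hic
    calc ‖p t - p s‖ = ‖∫ u in s..t, p' u‖ := by rw [hftc]
      _ ≤ ∫ u in s..t, ‖p' u‖ := intervalIntegral.norm_integral_le_integral_norm hst
      _ = ∫ u in s..t, v := by
          apply intervalIntegral.integral_congr
          intro u _
          exact hspeed u
      _ = (t - s) * v := by
          rw [intervalIntegral.integral_const, smul_eq_mul]
  -- core lemma: there is a pair with gap < P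
  have core : ∃ a b : ℝ, a < b ∧ b - a < P ∧ p a = p b := by
    classical
    set e := EuclideanSpace.equiv (Fin 2) ℝ with he
    have hpc : Continuous p := by
      rw [continuous_iff_continuousAt]
      exact fun x => (hderiv x).continuousAt
    set q : ℝ → ℂ := fun t => ((e (p t)) 0 : ℂ) + ((e (p t)) 1 : ℂ) * Complex.I with hq
    have hqc : Continuous q := by
      apply Continuous.add
      · apply Continuous.comp Complex.continuous_ofReal
        exact (continuous_apply (0 : Fin 2)).comp (e.continuous.comp hpc)
      · apply Continuous.mul _ continuous_const
        apply Continuous.comp Complex.continuous_ofReal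
        exact (continuous_apply (1 : Fin 2)).comp (e.continuous.comp hpc)
    have hqper : ∀ x : ℝ, q (x + P) = q x + P := by
      intro x
      have h1 : e (p (x + P)) = e (p x) + ![P, 0] := by
        rw [hper x, map_add, e.apply_symm_apply]
      simp only [hq]
      rw [h1]
      simp only [Pi.add_apply, Matrix.cons_val_zero, Matrix.cons_val_one, Matrix.head_cons]
      try push_cast
      try ring
    obtain ⟨x, y, hpeq, hne⟩ := Function.not_injective_iff.mp hninj
    have hq0 : q x = q y := by simp only [hq, hpeq]
    obtain ⟨a, b, hab, hgap, hqab⟩ := exists_small_gap hP hqc hqper hne hq0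
    refine ⟨a, b, hab, hgap, ?_⟩
    have h0 : (e (p a)) 0 = (e (p b)) 0 ∧ (e (p a)) 1 = (e (p b)) 1 := by
      have hre := congrArg Complex.re hqab
      have him := congrArg Complex.im hqab
      simp only [hq] at hre him
      constructor
      · simpa using hre
      · simpa using him
    have : e (p a) = e (p b) := by
      funext i
      fin_cases i
      · exact h0.1
      · exact h0.2
    exact e.injective this
  obtain ⟨a, b, hab, hbap, hpab⟩ := core
  refine ⟨a, b, hab, hpab, ?_⟩
  -- complement arc: from b to a + P
  have h1 : ‖p (a + P) - p b‖ = P := by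
    rw [hper a, hpab, add_sub_cancel_left]
    exact hw
  have h2 : ‖p (a + P) - p b‖ ≤ (a + P - b) * v := chord b (a + P) (by linarith)
  have hPv : P * v = ℓ := by
    rw [hv]
    field_simp
  nlinarith [h1, h2]
end

section
/- Let a < b, let c > 0, and let q : [a,b] → ℝ² be continuous with |q(s)| = c for all s ∈ [a,b] and ∫ₐᵇ q(s) ds = 0. If θ : [a,b] → ℝ is a continuous function with q(s) = c·(cos θ(s), sin θ(s)) for all s, then sup θ − inf θ ≥ π. In particular, the tangent direction of a closed constant-speed C¹ loop (where q = p' and p(a) = p(b)) sweeps an angle of at least π. -/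
open MeasureTheory intervalIntegral

/-- If a continuous plane vector field `q` on `[a,b]` has constant norm `c > 0`, zero
mean (total integral `0`), and a continuous angle lift `θ` with
`q s = c • (cos θ s, sin θ s)`, then the range of `θ` has width at least `π`. -/
theorem stmt_2
    (a b c : ℝ) (hab : a < b) (hc : 0 < c)
    (q : ℝ → EuclideanSpace ℝ (Fin 2)) (θ : ℝ → ℝ)
    (hqcont : ContinuousOn q (Set.Icc a b))
    (hqnorm : ∀ s ∈ Set.Icc a b, ‖q s‖ = c)
    (hint : (∫ s in a..b, q s) = 0)
    (hθcont : ContinuousOn θ (Set.Icc a b))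
    (hrep : ∀ s ∈ Set.Icc a b,
      q s = c • (EuclideanSpace.equiv (Fin 2) ℝ).symm ![Real.cos (θ s), Real.sin (θ s)]) :
    Real.pi ≤ sSup (θ '' Set.Icc a b) - sInf (θ '' Set.Icc a b) := by
  by_contra hlt
  push_neg at hlt
  set M := sSup (θ '' Set.Icc a b) with hM
  set m := sInf (θ '' Set.Icc a b) with hm
  have hne : (θ '' Set.Icc a b).Nonempty := ⟨θ a, ⟨a, ⟨le_refl a, hab.le⟩, rfl⟩⟩
  have hcpt : IsCompact (θ '' Set.Icc a b) := (isCompact_Icc).image_of_continuousOn hθcont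
  have hbdda : BddAbove (θ '' Set.Icc a b) := hcpt.bddAbove
  have hbddb : BddBelow (θ '' Set.Icc a b) := hcpt.bddBelow
  have hθmem : ∀ s ∈ Set.Icc a b, m ≤ θ s ∧ θ s ≤ M := fun s hs =>
    ⟨csInf_le hbddb ⟨s, hs, rfl⟩, le_csSup hbdda ⟨s, hs, rfl⟩⟩
  set φ := (m + M) / 2 with hφ
  set u : EuclideanSpace ℝ (Fin 2) :=
    (EuclideanSpace.equiv (Fin 2) ℝ).symm ![Real.cos φ, Real.sin φ] with hu
  -- the inner product with u is c * cos (θ s - φ)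
  have hinner : ∀ s ∈ Set.Icc a b,
      (inner ℝ u (q s) : ℝ) = c * Real.cos (θ s - φ) := by
    intro s hs
    rw [hrep s hs, inner_smul_right]
    have : (inner ℝ u ((EuclideanSpace.equiv (Fin 2) ℝ).symm
        ![Real.cos (θ s), Real.sin (θ s)]) : ℝ)
        = Real.cos φ * Real.cos (θ s) + Real.sin φ * Real.sin (θ s) := by
      simp [hu, PiLp.inner_apply, Fin.sum_univ_two, mul_comm]
    rw [this, Real.cos_sub]
    ring
  have huIcc : Set.uIcc a b = Set.Icc a b := Set.uIcc_of_le hab.le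
  have hqint : IntervalIntegrable q volume a b :=
    (huIcc ▸ hqcont : ContinuousOn q (Set.uIcc a b)).intervalIntegrable
  have hfint : IntervalIntegrable (fun s => (inner ℝ u (q s) : ℝ)) volume a b := by
    exact (huIcc ▸ (continuousOn_const.inner hqcont) :
      ContinuousOn _ (Set.uIcc a b)).intervalIntegrable
  have hzero : (∫ s in a..b, (inner ℝ u (q s) : ℝ)) = 0 := by
    have := (innerSL ℝ u).intervalIntegral_comp_comm hqint (a := a) (b := b)
    simp only [innerSL_apply_apply] at this
    rw [this, hint, inner_zero_right]
  have hpos : ∀ s ∈ Set.Ioo a b, 0 < (inner ℝ u (q s) : ℝ) := by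
    intro s hs
    have hs' : s ∈ Set.Icc a b := ⟨hs.1.le, hs.2.le⟩
    rw [hinner s hs']
    apply mul_pos hc
    apply Real.cos_pos_of_mem_Ioo
    obtain ⟨h1, h2⟩ := hθmem s hs'
    constructor
    · simp only [hφ]; nlinarith [Real.pi_pos]
    · simp only [hφ]; nlinarith [Real.pi_pos]
  have := intervalIntegral_pos_of_pos_on hfint hpos hab
  rw [hzero] at this
  exact lt_irrefl 0 this
end

section
/- Let L > 0 and let y : ℝ × [0,1] → ℝ be twice continuously differentiable, harmonic on ℝ × (0,1) (that is, ∂²y/∂u² + ∂²y/∂v² = 0), L-periodic in its first variable u, and satisfying y(u,0) = 0 for all u. Suppose ∫₀^L ∂_v y(u,1) du = P for some P ∈ ℝ. Then ∫₀^L ∫₀¹ |∇y(u,v)|² dv du ≥ P²/L, with equality if and only if y(u,v) = (P/L)·v for all (u,v). -/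
open MeasureTheory intervalIntegral Set

lemma aux_hd1 {Y : ℝ × ℝ → ℝ} (h : Differentiable ℝ Y) (a b : ℝ) :
    HasDerivAt (fun s => Y (s, b)) (fderiv ℝ Y (a, b) (1, 0)) a := by
  have h1 : HasDerivAt (fun s : ℝ => (s, b)) ((1:ℝ), (0:ℝ)) a :=
    HasDerivAt.prodMk (hasDerivAt_id a) (hasDerivAt_const a b)
  exact (h (a, b)).hasFDerivAt.comp_hasDerivAt a h1

lemma aux_hd2 {Y : ℝ × ℝ → ℝ} (h : Differentiable ℝ Y) (a b : ℝ) :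
    HasDerivAt (fun t => Y (a, t)) (fderiv ℝ Y (a, b) (0, 1)) b := by
  have h1 : HasDerivAt (fun t : ℝ => (a, t)) ((0:ℝ), (1:ℝ)) b :=
    HasDerivAt.prodMk (hasDerivAt_const b a) (hasDerivAt_id b)
  exact (h (a, b)).hasFDerivAt.comp_hasDerivAt b h1

lemma aux_fderiv_periodic {Y : ℝ × ℝ → ℝ} (h : Differentiable ℝ Y) (c : ℝ × ℝ)
    (hp : ∀ p, Y (p + c) = Y p) (x : ℝ × ℝ) : fderiv ℝ Y (x + c) = fderiv ℝ Y x := by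
  have h1 : HasFDerivAt (fun p => Y (p + c)) (fderiv ℝ Y (x + c)) x := by
    have := (h (x + c)).hasFDerivAt.comp x ((hasFDerivAt_id x).add_const c)
    exact this
  have h2 : HasFDerivAt Y (fderiv ℝ Y (x + c)) x := by
    convert h1 using 1; ext p; exact (hp p).symm
  exact (h2.fderiv).symm

lemma aux_swap {H : ℝ → ℝ → ℝ} (hH : Continuous (Function.uncurry H))
    {a b c d : ℝ} (hab : a ≤ b) (hcd : c ≤ d) :
    (∫ u in a..b, ∫ v in c..d, H u v) = ∫ v in c..d, ∫ u in a..b, H u v := by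
  have hint : Integrable (Function.uncurry H)
      ((volume.restrict (Ioc a b)).prod (volume.restrict (Ioc c d))) := by
    rw [Measure.prod_restrict]
    exact (hH.continuousOn.integrableOn_compact (isCompact_Icc.prod isCompact_Icc)).mono_set
      (Set.prod_mono Ioc_subset_Icc_self Ioc_subset_Icc_self)
  have := integral_integral_swap hint
  simp only [intervalIntegral.integral_of_le hab, intervalIntegral.integral_of_le hcd]
  exact this

lemma aux_zero_of_nonneg {h : ℝ → ℝ} {a b : ℝ} (hab : a < b)
    (hc : Continuous h) (h0 : ∀ x, 0 ≤ h x)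
    (hi : (∫ x in a..b, h x) = 0) : ∀ x ∈ Icc a b, h x = 0 := by
  have hIoo : EqOn h 0 (Ioo a b) := by
    intro x hx
    by_contra hne
    have hpos : 0 < h x := lt_of_le_of_ne (h0 x) (Ne.symm (by simpa using hne))
    have hns : ¬ (0 < ∫ t in a..b, h t) := by rw [hi]; exact lt_irrefl 0
    rw [integral_pos_iff_support_of_nonneg_ae (Filter.Eventually.of_forall h0)
      (hc.intervalIntegrable a b)] at hns
    push_neg at hns
    have hμ := hns hab
    have hU : IsOpen (Ioo a b ∩ h ⁻¹' (Ioi 0)) := isOpen_Ioo.inter (isOpen_Ioi.preimage hc)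
    have hUne : (Ioo a b ∩ h ⁻¹' (Ioi 0)).Nonempty := ⟨x, hx, hpos⟩
    have hvol := hU.measure_pos volume hUne
    have hsub : (Ioo a b ∩ h ⁻¹' (Ioi 0)) ⊆ Function.support h ∩ Ioc a b := by
      rintro z ⟨hz1, hz2⟩
      exact ⟨ne_of_gt hz2, Ioo_subset_Ioc_self hz1⟩
    exact absurd (lt_of_lt_of_le hvol (measure_mono hsub)) (by simpa using hμ)
  have hcl := hIoo.closure hc continuous_const
  rw [closure_Ioo hab.ne] at hcl
  exact fun x hx => hcl hx

/-- For an `L`-periodic harmonic function `y` on the strip `ℝ × [0,1]` vanishing on the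
bottom and with flux `P` through the top, the Dirichlet integral over one period is at
least `P²/L`, with equality iff `y(u,v) = (P/L)·v`. -/
theorem stmt_4
    (L P : ℝ) (hL : 0 < L)
    (y : ℝ → ℝ → ℝ)
    (hsmooth : ContDiff ℝ 2 (Function.uncurry y))
    (hharm : ∀ u v : ℝ, 0 < v → v < 1 →
      deriv (fun t => deriv (fun s => y s v) t) u
        + deriv (fun t => deriv (y u) t) v = 0)
    (hper : ∀ u v : ℝ, y (u + L) v = y u v)
    (hbot : ∀ u : ℝ, y u 0 = 0)
    (hflux : (∫ u in (0:ℝ)..L, deriv (y u) 1) = P) :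
    (P ^ 2 / L ≤ ∫ u in (0:ℝ)..L, ∫ v in (0:ℝ)..1,
        ((deriv (fun s => y s v) u) ^ 2 + (deriv (y u) v) ^ 2)) ∧
    ((∫ u in (0:ℝ)..L, ∫ v in (0:ℝ)..1,
        ((deriv (fun s => y s v) u) ^ 2 + (deriv (y u) v) ^ 2)) = P ^ 2 / L ↔
      ∀ u v : ℝ, v ∈ Set.Icc (0:ℝ) 1 → y u v = (P / L) * v) := by
  set Y : ℝ × ℝ → ℝ := Function.uncurry y with hYdef
  have hdiffY : Differentiable ℝ Y := hsmooth.differentiable (by norm_num)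
  set f₁ : ℝ × ℝ → ℝ := fun p => fderiv ℝ Y p (1, 0) with hf₁def
  set f₂ : ℝ × ℝ → ℝ := fun p => fderiv ℝ Y p (0, 1) with hf₂def
  -- first partial derivatives
  have hfd1 : ∀ u v : ℝ, HasDerivAt (fun s => y s v) (f₁ (u, v)) u := fun u v =>
    aux_hd1 hdiffY u v
  have hfd2 : ∀ u v : ℝ, HasDerivAt (y u) (f₂ (u, v)) v := fun u v => aux_hd2 hdiffY u v
  have hpd1 : ∀ u v : ℝ, deriv (fun s => y s v) u = f₁ (u, v) := fun u v => (hfd1 u v).deriv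
  have hpd2 : ∀ u v : ℝ, deriv (y u) v = f₂ (u, v) := fun u v => (hfd2 u v).deriv
  -- smoothness of the partials
  have hc1 : ContDiff ℝ 1 f₁ :=
    ((ContinuousLinearMap.apply ℝ ℝ ((1:ℝ),(0:ℝ))).contDiff).comp
      (hsmooth.fderiv_right (by norm_num))
  have hc2 : ContDiff ℝ 1 f₂ :=
    ((ContinuousLinearMap.apply ℝ ℝ ((0:ℝ),(1:ℝ))).contDiff).comp
      (hsmooth.fderiv_right (by norm_num))
  have hcf1 : Continuous f₁ := hc1.continuous
  have hcf2 : Continuous f₂ := hc2.continuous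
  -- second partials
  set A : ℝ × ℝ → ℝ := fun p => fderiv ℝ f₁ p (1, 0) with hAdef
  set B : ℝ × ℝ → ℝ := fun p => fderiv ℝ f₂ p (0, 1) with hBdef
  have hAcont : Continuous A :=
    ((ContinuousLinearMap.apply ℝ ℝ ((1:ℝ),(0:ℝ))).continuous).comp
      (hc1.continuous_fderiv one_ne_zero)
  have hBcont : Continuous B :=
    ((ContinuousLinearMap.apply ℝ ℝ ((0:ℝ),(1:ℝ))).continuous).comp
      (hc2.continuous_fderiv one_ne_zero)
  have hA : ∀ u v : ℝ, HasDerivAt (fun s => f₁ (s, v)) (A (u, v)) u := fun u v =>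
    aux_hd1 (hc1.differentiable one_ne_zero) u v
  have hB : ∀ u v : ℝ, HasDerivAt (fun t => f₂ (u, t)) (B (u, v)) v := fun u v =>
    aux_hd2 (hc2.differentiable one_ne_zero) u v
  -- harmonicity on the closed strip
  have hAB : ∀ u : ℝ, ∀ v ∈ Icc (0:ℝ) 1, A (u, v) + B (u, v) = 0 := by
    intro u
    have hopen : EqOn (fun v => A (u, v) + B (u, v)) 0 (Ioo (0:ℝ) 1) := by
      intro v hv
      have h1 : (fun t => deriv (fun s => y s v) t) = fun t => f₁ (t, v) := by
        funext t; exact hpd1 t v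
      have h2 : (fun t => deriv (y u) t) = fun t => f₂ (u, t) := by
        funext t; exact hpd2 u t
      have := hharm u v hv.1 hv.2
      rw [h1, h2, (hA u v).deriv, (hB u v).deriv] at this
      exact this
    have hcont : Continuous (fun v => A (u, v) + B (u, v)) :=
      (hAcont.comp (continuous_const.prodMk continuous_id)).add
        (hBcont.comp (continuous_const.prodMk continuous_id))
    have hcl := hopen.closure hcont continuous_const
    rw [closure_Ioo one_ne_zero.symm] at hcl
    exact fun v hv => hcl hv
  -- periodicity of the partials
  have hperY : ∀ p : ℝ × ℝ, Y (p + (L, 0)) = Y p := by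
    intro p
    show y (p.1 + L) (p.2 + 0) = y p.1 p.2
    rw [add_zero, hper]
  have hfderper : ∀ x : ℝ × ℝ, fderiv ℝ Y (x + (L, 0)) = fderiv ℝ Y x :=
    aux_fderiv_periodic hdiffY (L, 0) hperY
  have hper1 : ∀ u v : ℝ, f₁ (u + L, v) = f₁ (u, v) := by
    intro u v
    have := hfderper (u, v)
    simp only [hf₁def]
    rw [show ((u + L, v) : ℝ × ℝ) = (u, v) + (L, 0) by simp, this]
  have hper2 : ∀ u v : ℝ, f₂ (u + L, v) = f₂ (u, v) := by
    intro u v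
    have := hfderper (u, v)
    simp only [hf₂def]
    rw [show ((u + L, v) : ℝ × ℝ) = (u, v) + (L, 0) by simp, this]
  -- ∫ A over a period vanishes
  have hAint : ∀ t : ℝ, (∫ u in (0:ℝ)..L, A (u, t)) = 0 := by
    intro t
    have := integral_eq_sub_of_hasDerivAt (f := fun s => f₁ (s, t))
      (fun s _ => hA s t) ((hAcont.comp (continuous_id.prodMk continuous_const)).intervalIntegrable 0 L)
    rw [this]
    have h0 := hper1 0 t
    rw [zero_add] at h0
    show f₁ (L, t) - f₁ (0, t) = 0
    rw [h0, sub_self]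
  -- FTC in the vertical direction for f₂
  have hBint : ∀ u v : ℝ, (∫ t in v..1, B (u, t)) = f₂ (u, 1) - f₂ (u, v) := by
    intro u v
    exact integral_eq_sub_of_hasDerivAt (fun t _ => hB u t)
      ((hBcont.comp (continuous_const.prodMk continuous_id)).intervalIntegrable v 1)
  -- flux is constant in v
  have hF1 : (∫ u in (0:ℝ)..L, f₂ (u, 1)) = P := by
    rw [← hflux]
    exact integral_congr (fun u _ => (hpd2 u 1).symm)
  have hflux_const : ∀ v ∈ Icc (0:ℝ) 1, (∫ u in (0:ℝ)..L, f₂ (u, v)) = P := by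
    intro v hv
    have hdiff : (∫ u in (0:ℝ)..L, (f₂ (u, 1) - f₂ (u, v))) = 0 := by
      have e1 : (∫ u in (0:ℝ)..L, (f₂ (u, 1) - f₂ (u, v)))
          = ∫ u in (0:ℝ)..L, ∫ t in v..1, B (u, t) := by
        exact integral_congr (fun u _ => (hBint u v).symm)
      rw [e1, aux_swap (by exact hBcont) hL.le hv.2]
      have : ∀ t ∈ uIcc v 1, (∫ u in (0:ℝ)..L, B (u, t)) = 0 := by
        intro t ht
        rw [uIcc_of_le hv.2] at ht
        have htmem : t ∈ Icc (0:ℝ) 1 := ⟨le_trans hv.1 ht.1, ht.2⟩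
        have : (∫ u in (0:ℝ)..L, B (u, t)) = ∫ u in (0:ℝ)..L, -A (u, t) := by
          refine integral_congr (fun u _ => ?_)
          have := hAB u t htmem
          linarith
        rw [this, intervalIntegral.integral_neg, hAint t, neg_zero]
      calc (∫ t in v..1, ∫ u in (0:ℝ)..L, B (u, t))
          = ∫ t in v..1, (0:ℝ) := integral_congr this
        _ = 0 := by simp
    have hi1 : IntervalIntegrable (fun u => f₂ (u, 1)) volume 0 L :=
      (hc2.continuous.comp (continuous_id.prodMk continuous_const)).intervalIntegrable 0 L
    have hi2 : IntervalIntegrable (fun u => f₂ (u, v)) volume 0 L :=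
      (hc2.continuous.comp (continuous_id.prodMk continuous_const)).intervalIntegrable 0 L
    rw [intervalIntegral.integral_sub hi1 hi2, hF1] at hdiff
    linarith
  -- total flux over the rectangle
  have hTot : (∫ u in (0:ℝ)..L, ∫ v in (0:ℝ)..1, f₂ (u, v)) = P := by
    rw [aux_swap (by exact hc2.continuous) hL.le zero_le_one]
    have : ∀ v ∈ uIcc (0:ℝ) 1, (∫ u in (0:ℝ)..L, f₂ (u, v)) = P := by
      intro v hv
      rw [uIcc_of_le zero_le_one] at hv
      exact hflux_const v hv
    rw [integral_congr this]
    simp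
  set c : ℝ := P / L with hcdef
  -- continuity facts
  have hcontQin : Continuous (Function.uncurry fun u v =>
      f₁ (u, v) ^ 2 + (f₂ (u, v) - c) ^ 2) := by
    have e : (Function.uncurry fun u v => f₁ (u, v) ^ 2 + (f₂ (u, v) - c) ^ 2)
        = fun p => f₁ p ^ 2 + (f₂ p - c) ^ 2 := by
      funext p; rfl
    rw [e]
    exact (hcf1.pow 2).add ((hcf2.sub continuous_const).pow 2)
  set Q : ℝ := ∫ u in (0:ℝ)..L, ∫ v in (0:ℝ)..1,
      (f₁ (u, v) ^ 2 + (f₂ (u, v) - c) ^ 2) with hQdef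
  -- rewrite the Dirichlet integrand
  have hIrw : (∫ u in (0:ℝ)..L, ∫ v in (0:ℝ)..1,
        ((deriv (fun s => y s v) u) ^ 2 + (deriv (y u) v) ^ 2))
      = ∫ u in (0:ℝ)..L, ∫ v in (0:ℝ)..1, (f₁ (u, v) ^ 2 + f₂ (u, v) ^ 2) := by
    simp only [hpd1, hpd2]
  -- the key decomposition I = Q + P²/L
  have hkey : (∫ u in (0:ℝ)..L, ∫ v in (0:ℝ)..1, (f₁ (u, v) ^ 2 + f₂ (u, v) ^ 2))
      = Q + P ^ 2 / L := by
    have hinner : ∀ u : ℝ, (∫ v in (0:ℝ)..1, (f₁ (u, v) ^ 2 + f₂ (u, v) ^ 2))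
        = (∫ v in (0:ℝ)..1, (f₁ (u, v) ^ 2 + (f₂ (u, v) - c) ^ 2))
          + 2 * c * (∫ v in (0:ℝ)..1, f₂ (u, v)) - c ^ 2 := by
      intro u
      have hcu1 : Continuous (fun v => f₁ (u, v)) :=
        hc1.continuous.comp (continuous_const.prodMk continuous_id)
      have hcu2 : Continuous (fun v => f₂ (u, v)) :=
        hc2.continuous.comp (continuous_const.prodMk continuous_id)
      have i1 : IntervalIntegrable (fun v => f₁ (u, v) ^ 2 + (f₂ (u, v) - c) ^ 2)
          volume 0 1 :=
        ((hcu1.pow 2).add ((hcu2.sub continuous_const).pow 2)).intervalIntegrable 0 1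
      have i2 : IntervalIntegrable (fun v => 2 * c * f₂ (u, v) - c ^ 2) volume 0 1 :=
        ((continuous_const.mul hcu2).sub continuous_const).intervalIntegrable 0 1
      have ept : ∀ v : ℝ, f₁ (u, v) ^ 2 + f₂ (u, v) ^ 2
          = (f₁ (u, v) ^ 2 + (f₂ (u, v) - c) ^ 2) + (2 * c * f₂ (u, v) - c ^ 2) := by
        intro v; ring
      rw [integral_congr (fun v _ => ept v), intervalIntegral.integral_add i1 i2,
        intervalIntegral.integral_sub ((by exact continuous_const.mul hcu2 :
          Continuous (fun v => 2 * c * f₂ (u, v))).intervalIntegrable 0 1)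
          (intervalIntegrable_const),
        intervalIntegral.integral_const_mul]
      simp
      ring
    have hcint1 : Continuous (fun u => ∫ v in (0:ℝ)..1,
        (f₁ (u, v) ^ 2 + (f₂ (u, v) - c) ^ 2)) :=
      intervalIntegral.continuous_parametric_intervalIntegral_of_continuous' hcontQin 0 1
    have hcint2 : Continuous (fun u => ∫ v in (0:ℝ)..1, f₂ (u, v)) :=
      intervalIntegral.continuous_parametric_intervalIntegral_of_continuous'
        (by exact hc2.continuous) 0 1
    have hi3 : IntervalIntegrable (fun u => (∫ v in (0:ℝ)..1,
        (f₁ (u, v) ^ 2 + (f₂ (u, v) - c) ^ 2)) + 2 * c * (∫ v in (0:ℝ)..1, f₂ (u, v)))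
        volume 0 L := (hcint1.add (continuous_const.mul hcint2)).intervalIntegrable 0 L
    rw [integral_congr (fun u (_ : u ∈ uIcc (0:ℝ) L) => hinner u)]
    rw [intervalIntegral.integral_sub hi3 intervalIntegrable_const,
      intervalIntegral.integral_add (hcint1.intervalIntegrable 0 L)
        ((by exact continuous_const.mul hcint2 :
          Continuous (fun u => 2 * c * ∫ v in (0:ℝ)..1, f₂ (u, v))).intervalIntegrable 0 L),
      intervalIntegral.integral_const_mul, hTot]
    simp only [intervalIntegral.integral_const, smul_eq_mul, sub_zero, ← hQdef]
    rw [hcdef]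
    field_simp
    ring
  -- nonnegativity of Q
  have hQnn : 0 ≤ Q := by
    rw [hQdef]
    apply intervalIntegral.integral_nonneg hL.le
    intro u _
    apply intervalIntegral.integral_nonneg zero_le_one
    intro v _
    positivity
  constructor
  · rw [hIrw, hkey]; linarith
  rw [hIrw, hkey]
  constructor
  · -- equality implies linear profile
    intro hEq
    have hQ0 : Q = 0 := by linarith
    -- inner nonneg function with zero double integral
    have hGcont : Continuous (fun u => ∫ v in (0:ℝ)..1,
        (f₁ (u, v) ^ 2 + (f₂ (u, v) - c) ^ 2)) :=
      intervalIntegral.continuous_parametric_intervalIntegral_of_continuous' hcontQin 0 1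
    have hGnn : ∀ u, 0 ≤ ∫ v in (0:ℝ)..1, (f₁ (u, v) ^ 2 + (f₂ (u, v) - c) ^ 2) := by
      intro u
      apply intervalIntegral.integral_nonneg zero_le_one
      intro v _; positivity
    have hG0 : ∀ u ∈ Icc (0:ℝ) L, (∫ v in (0:ℝ)..1,
        (f₁ (u, v) ^ 2 + (f₂ (u, v) - c) ^ 2)) = 0 :=
      aux_zero_of_nonneg hL hGcont hGnn (hQdef ▸ hQ0)
    have hptw : ∀ u ∈ Icc (0:ℝ) L, ∀ v ∈ Icc (0:ℝ) 1,
        f₁ (u, v) ^ 2 + (f₂ (u, v) - c) ^ 2 = 0 := by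
      intro u hu
      apply aux_zero_of_nonneg one_pos
      · exact ((hcf1.comp (continuous_const.prodMk continuous_id)).pow 2).add
          (((hcf2.comp (continuous_const.prodMk continuous_id)).sub continuous_const).pow 2)
      · intro v; positivity
      · exact hG0 u hu
    have hf2c' : ∀ u ∈ Icc (0:ℝ) L, ∀ v ∈ Icc (0:ℝ) 1, f₂ (u, v) = c := by
      intro u hu v hv
      have := hptw u hu v hv
      nlinarith [sq_nonneg (f₁ (u, v)), sq_nonneg (f₂ (u, v) - c)]
    -- extend to all u by periodicity
    have hf2c : ∀ u : ℝ, ∀ v ∈ Icc (0:ℝ) 1, f₂ (u, v) = c := by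
      intro u v hv
      have hperf : Function.Periodic (fun u => f₂ (u, v)) L := fun x => hper2 x v
      have hmem : u - (⌊u / L⌋ : ℤ) * L ∈ Icc (0:ℝ) L := by
        have h1 : u - (⌊u / L⌋ : ℤ) * L = L * Int.fract (u / L) := by
          rw [Int.fract]
          field_simp
        rw [h1]
        constructor
        · exact mul_nonneg hL.le (Int.fract_nonneg _)
        · nlinarith [Int.fract_lt_one (u / L), Int.fract_nonneg (u / L)]
      have heq : f₂ (u - (⌊u / L⌋ : ℤ) * L, v) = f₂ (u, v) :=
        hperf.sub_int_mul_eq (x := u) (⌊u / L⌋)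
      rw [← heq]
      exact hf2c' _ hmem v hv
    -- integrate up from the bottom
    intro u v hv
    have hftc : y u v - y u 0 = ∫ t in (0:ℝ)..v, f₂ (u, t) :=
      (integral_eq_sub_of_hasDerivAt (fun t _ => hfd2 u t)
        ((hc2.continuous.comp (continuous_const.prodMk continuous_id)).intervalIntegrable
          0 v)).symm
    have hconst : (∫ t in (0:ℝ)..v, f₂ (u, t)) = ∫ t in (0:ℝ)..v, c := by
      refine integral_congr (fun t ht => ?_)
      rw [uIcc_of_le hv.1] at ht
      exact hf2c u t ⟨ht.1, le_trans ht.2 hv.2⟩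
    rw [hbot, sub_zero] at hftc
    rw [hftc, hconst]
    simp only [intervalIntegral.integral_const, smul_eq_mul, sub_zero, hcdef]
    ring
  · -- linear profile implies equality
    intro hy
    have hf2c : ∀ u : ℝ, ∀ v ∈ Ioo (0:ℝ) 1, f₂ (u, v) = c := by
      intro u v hv
      have hev : y u =ᶠ[nhds v] fun t => c * t :=
        Filter.eventuallyEq_of_mem (Ioo_mem_nhds hv.1 hv.2)
          (fun t ht => hy u t (Ioo_subset_Icc_self ht))
      have : deriv (y u) v = deriv (fun t => c * t) v := hev.deriv_eq
      rw [hpd2] at this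
      rw [this]
      simpa using ((hasDerivAt_id v).const_mul c).deriv
    have hf1c : ∀ u : ℝ, ∀ v ∈ Icc (0:ℝ) 1, f₁ (u, v) = 0 := by
      intro u v hv
      have : (fun s => y s v) = fun _ => c * v := by
        funext s; exact hy s v hv
      rw [← hpd1, this, deriv_const]
    have hQ0 : Q = 0 := by
      rw [hQdef]
      have hinner0 : ∀ u ∈ uIcc (0:ℝ) L, (∫ v in (0:ℝ)..1,
          (f₁ (u, v) ^ 2 + (f₂ (u, v) - c) ^ 2)) = (0:ℝ) := by
        intro u _
        rw [intervalIntegral.integral_of_le zero_le_one,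
          ← setIntegral_congr_set Ioo_ae_eq_Ioc]
        rw [setIntegral_congr_fun measurableSet_Ioo (g := fun _ => (0:ℝ))]
        · simp
        · intro v hv
          show f₁ (u, v) ^ 2 + (f₂ (u, v) - c) ^ 2 = 0
          rw [hf1c u v (Ioo_subset_Icc_self hv), hf2c u v hv]
          ring
      rw [integral_congr hinner0]
      simp
    rw [hQ0, zero_add]
end

section
/- Let P, Q > 0 and let ψ : ℝ × [0,Q] → ℝ be twice continuously differentiable, P-periodic in its first variable x₁, and satisfying ψ(x₁,0) = 0 for all x₁. Set ζ = −Δψ, let I = ∫_{(0,P)×(0,Q)} ∂₂ψ(x) dx (the total horizontal impulse) and C = ∫₀^P ∂₂ψ(x₁,Q) dx₁ (the circulation along the top of one period). Then I − Q·C = ∫_{(0,P)×(0,Q)} x₂ ζ(x) dx. Consequently, if ζ ≥ 0 almost everywhere and ζ is not almost everywhere zero, then I − Q·C > 0. -/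
open MeasureTheory intervalIntegral

/-- For a `P`-periodic stream function `ψ` on the strip of height `Q` vanishing on the
bottom, with vorticity `ζ = −Δψ`, impulse `I` and circulation `C` along the top,
one has `I − Q·C = ∫∫ x₂ ζ`; hence if `ζ ≥ 0` a.e. and `ζ` is not a.e. zero on one
period of the strip, then `I − Q·C > 0`. -/
theorem stmt_6
    (P Q : ℝ) (hP : 0 < P) (hQ : 0 < Q)
    (ψ : ℝ → ℝ → ℝ)
    (hsmooth : ContDiff ℝ 2 (Function.uncurry ψ))
    (hper : ∀ x₁ x₂ : ℝ, ψ (x₁ + P) x₂ = ψ x₁ x₂)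
    (hbot : ∀ x₁ : ℝ, ψ x₁ 0 = 0)
    (ζ : ℝ → ℝ → ℝ)
    (hζ : ∀ x₁ x₂ : ℝ, ζ x₁ x₂ =
      -(deriv (fun t => deriv (fun s => ψ s x₂) t) x₁
          + deriv (fun t => deriv (ψ x₁) t) x₂))
    (I C : ℝ)
    (hI : I = ∫ x₁ in (0:ℝ)..P, ∫ x₂ in (0:ℝ)..Q, deriv (ψ x₁) x₂)
    (hC : C = ∫ x₁ in (0:ℝ)..P, deriv (ψ x₁) Q) :
    (I - Q * C = ∫ x₁ in (0:ℝ)..P, ∫ x₂ in (0:ℝ)..Q, x₂ * ζ x₁ x₂) ∧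
    ((∀ᵐ x ∂(volume.restrict (Set.Ioo 0 P ×ˢ Set.Ioo 0 Q) : Measure (ℝ × ℝ)),
        0 ≤ ζ x.1 x.2) →
      ¬ (∀ᵐ x ∂(volume.restrict (Set.Ioo 0 P ×ˢ Set.Ioo 0 Q) : Measure (ℝ × ℝ)),
        ζ x.1 x.2 = 0) →
      0 < I - Q * C) := by
  set F : ℝ × ℝ → ℝ := Function.uncurry ψ with hFdef
  have hF : ContDiff ℝ 2 F := hsmooth
  set g : ℝ × ℝ → ℝ := fun p => fderiv ℝ F p (0, 1) with hgdef
  set h : ℝ × ℝ → ℝ := fun p => fderiv ℝ F p (1, 0) with hhdef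
  have hg1 : ContDiff ℝ 1 g := (hF.fderiv_right (by norm_num)).clm_apply contDiff_const
  have hh1 : ContDiff ℝ 1 h := (hF.fderiv_right (by norm_num)).clm_apply contDiff_const
  have hgc : Continuous g := hg1.continuous
  have hFdiff : Differentiable ℝ F := hF.differentiable (by norm_num)
  have hDg : ∀ x₁ x₂ : ℝ, HasDerivAt (ψ x₁) (g (x₁, x₂)) x₂ := by
    intro x₁ x₂
    exact (hFdiff (x₁, x₂)).hasFDerivAt.comp_hasDerivAt x₂
      ((hasDerivAt_const x₂ x₁).prodMk (hasDerivAt_id x₂))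
  have hDh : ∀ x₁ x₂ : ℝ, HasDerivAt (fun s => ψ s x₂) (h (x₁, x₂)) x₁ := by
    intro x₁ x₂
    exact (hFdiff (x₁, x₂)).hasFDerivAt.comp_hasDerivAt x₁
      ((hasDerivAt_id x₁).prodMk (hasDerivAt_const x₁ x₂))
  have hgdiff : Differentiable ℝ g := hg1.differentiable one_ne_zero
  have hhdiff : Differentiable ℝ h := hh1.differentiable one_ne_zero
  set g₂ : ℝ × ℝ → ℝ := fun p => fderiv ℝ g p (0, 1) with hg2def
  set h₁ : ℝ × ℝ → ℝ := fun p => fderiv ℝ h p (1, 0) with hh1def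
  have hg₂c : Continuous g₂ :=
    (((hg1.fderiv_right (m := 0) (by norm_num)).clm_apply contDiff_const).continuous)
  have hh₁c : Continuous h₁ :=
    (((hh1.fderiv_right (m := 0) (by norm_num)).clm_apply contDiff_const).continuous)
  have hDg₂ : ∀ x₁ x₂ : ℝ, HasDerivAt (fun t => g (x₁, t)) (g₂ (x₁, x₂)) x₂ := by
    intro x₁ x₂
    exact (hgdiff (x₁, x₂)).hasFDerivAt.comp_hasDerivAt x₂
      ((hasDerivAt_const x₂ x₁).prodMk (hasDerivAt_id x₂))
  have hDh₁ : ∀ x₁ x₂ : ℝ, HasDerivAt (fun s => h (s, x₂)) (h₁ (x₁, x₂)) x₁ := by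
    intro x₁ x₂
    exact (hhdiff (x₁, x₂)).hasFDerivAt.comp_hasDerivAt x₁
      ((hasDerivAt_id x₁).prodMk (hasDerivAt_const x₁ x₂))
  have hderiv_g : ∀ x₁ x₂ : ℝ, deriv (ψ x₁) x₂ = g (x₁, x₂) := fun x₁ x₂ => (hDg x₁ x₂).deriv
  -- ζ in terms of second partials
  have hζ' : ∀ x₁ x₂ : ℝ, ζ x₁ x₂ = -(h₁ (x₁, x₂) + g₂ (x₁, x₂)) := by
    intro x₁ x₂
    rw [hζ]
    have e1 : (fun t => deriv (fun s => ψ s x₂) t) = fun t => h (t, x₂) :=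
      funext fun t => (hDh t x₂).deriv
    have e2 : (fun t => deriv (ψ x₁) t) = fun t => g (x₁, t) :=
      funext fun t => (hDg x₁ t).deriv
    rw [e1, e2, (hDh₁ x₁ x₂).deriv, (hDg₂ x₁ x₂).deriv]
  -- periodicity of h
  have hhper : ∀ x₁ x₂ : ℝ, h (x₁ + P, x₂) = h (x₁, x₂) := by
    intro x₁ x₂
    have hshift : HasDerivAt (fun s => ψ (s + P) x₂) (h (x₁ + P, x₂) * 1) x₁ :=
      by have := (hDh (x₁ + P) x₂).comp (h := fun s => s + P) x₁ ((hasDerivAt_id x₁).add_const P); exact this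
    have hfe : (fun s : ℝ => ψ (s + P) x₂) = fun s => ψ s x₂ := funext fun s => hper s x₂
    rw [hfe] at hshift
    have := hshift.unique (hDh x₁ x₂)
    linarith [this]
  -- FTC in x₁ direction: integral of h₁ over a period vanishes
  have hFTC1 : ∀ x₂ : ℝ, (∫ t in (0:ℝ)..P, h₁ (t, x₂)) = 0 := by
    intro x₂
    rw [intervalIntegral.integral_eq_sub_of_hasDerivAt (fun t _ => hDh₁ t x₂)
      ((hh₁c.comp (continuous_id.prodMk continuous_const)).intervalIntegrable 0 P)]
    have := hhper 0 x₂
    rw [zero_add] at this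
    rw [this, sub_self]
  -- integration by parts in x₂ direction
  have hIBP : ∀ x₁ : ℝ, (∫ t in (0:ℝ)..Q, t * g₂ (x₁, t))
      = Q * g (x₁, Q) - ∫ t in (0:ℝ)..Q, g (x₁, t) := by
    intro x₁
    have := intervalIntegral.integral_mul_deriv_eq_deriv_mul
      (u := fun t : ℝ => t) (v := fun t => g (x₁, t)) (u' := fun _ => (1:ℝ))
      (v' := fun t => g₂ (x₁, t))
      (fun t _ => hasDerivAt_id t) (fun t _ => hDg₂ x₁ t)
      (intervalIntegrable_const)
      ((hg₂c.comp (continuous_const.prodMk continuous_id)).intervalIntegrable 0 Q)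
    simpa using this
  -- inner integral identity
  have hInner : ∀ x₁ : ℝ, (∫ x₂ in (0:ℝ)..Q, x₂ * ζ x₁ x₂)
      = (∫ t in (0:ℝ)..Q, g (x₁, t)) - Q * g (x₁, Q) - ∫ t in (0:ℝ)..Q, t * h₁ (x₁, t) := by
    intro x₁
    have e1 : Set.EqOn (fun t : ℝ => t * ζ x₁ t)
        (fun t => -(t * h₁ (x₁, t)) + -(t * g₂ (x₁, t))) (Set.uIcc 0 Q) := by
      intro t _
      simp only [hζ']
      ring
    have i1 : IntervalIntegrable (fun t : ℝ => -(t * h₁ (x₁, t))) volume 0 Q :=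
      Continuous.intervalIntegrable
        (by exact ((continuous_id.mul (hh₁c.comp (continuous_const.prodMk continuous_id))).neg)) 0 Q
    have i2 : IntervalIntegrable (fun t : ℝ => -(t * g₂ (x₁, t))) volume 0 Q :=
      Continuous.intervalIntegrable
        (by exact ((continuous_id.mul (hg₂c.comp (continuous_const.prodMk continuous_id))).neg)) 0 Q
    rw [intervalIntegral.integral_congr e1, intervalIntegral.integral_add i1 i2,
      intervalIntegral.integral_neg, intervalIntegral.integral_neg, hIBP x₁]
    ring
  -- continuity of the parametric integrals
  have hcJ1 : Continuous fun x₁ => ∫ t in (0:ℝ)..Q, g (x₁, t) :=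
    intervalIntegral.continuous_parametric_intervalIntegral_of_continuous'
      (f := fun x₁ t => g (x₁, t)) (by exact hgc.comp (continuous_fst.prodMk continuous_snd)) 0 Q
  have hcJ3 : Continuous fun x₁ => ∫ t in (0:ℝ)..Q, t * h₁ (x₁, t) :=
    intervalIntegral.continuous_parametric_intervalIntegral_of_continuous'
      (f := fun x₁ t => t * h₁ (x₁, t))
      (by exact continuous_snd.mul (hh₁c.comp (continuous_fst.prodMk continuous_snd))) 0 Q
  have hcJ2 : Continuous fun x₁ => Q * g (x₁, Q) :=
    continuous_const.mul (hgc.comp (continuous_id.prodMk continuous_const))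
  -- Fubini: the cross term vanishes
  have hswap_int : Integrable (Function.uncurry fun x₁ t => t * h₁ (x₁, t))
      ((volume.restrict (Set.Ioc (0:ℝ) P)).prod (volume.restrict (Set.Ioc (0:ℝ) Q))) := by
    rw [Measure.prod_restrict]
    have hc : Continuous fun p : ℝ × ℝ => p.2 * h₁ p := continuous_snd.mul hh₁c
    have hint : IntegrableOn (fun p : ℝ × ℝ => p.2 * h₁ p)
        (Set.Icc 0 P ×ˢ Set.Icc 0 Q) (volume.prod volume) := by
      rw [← Measure.volume_eq_prod]
      exact hc.continuousOn.integrableOn_compact (isCompact_Icc.prod isCompact_Icc)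
    exact hint.mono_set (Set.prod_mono Set.Ioc_subset_Icc_self Set.Ioc_subset_Icc_self)
  have hFub : (∫ x₁ in (0:ℝ)..P, ∫ t in (0:ℝ)..Q, t * h₁ (x₁, t)) = 0 := by
    rw [intervalIntegral.integral_of_le hP.le]
    simp only [intervalIntegral.integral_of_le hQ.le]
    rw [MeasureTheory.integral_integral_swap hswap_int]
    have hz : ∀ t : ℝ, (∫ x₁ in Set.Ioc (0:ℝ) P, t * h₁ (x₁, t)) = 0 := by
      intro t
      rw [MeasureTheory.integral_const_mul, ← intervalIntegral.integral_of_le hP.le, hFTC1 t,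
        mul_zero]
    simp only [hz, MeasureTheory.integral_zero]
  -- the main identity
  have hIg : I = ∫ x₁ in (0:ℝ)..P, ∫ t in (0:ℝ)..Q, g (x₁, t) := by
    rw [hI]; simp only [hderiv_g]
  have hCg : C = ∫ x₁ in (0:ℝ)..P, g (x₁, Q) := by
    rw [hC]; simp only [hderiv_g]
  have hmain : I - Q * C = ∫ x₁ in (0:ℝ)..P, ∫ x₂ in (0:ℝ)..Q, x₂ * ζ x₁ x₂ := by
    rw [intervalIntegral.integral_congr (fun x₁ _ => hInner x₁),
      intervalIntegral.integral_sub
        (f := fun x₁ => (∫ t in (0:ℝ)..Q, g (x₁, t)) - Q * g (x₁, Q))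
        ((hcJ1.sub hcJ2).intervalIntegrable 0 P)
        (hcJ3.intervalIntegrable 0 P),
      intervalIntegral.integral_sub (hcJ1.intervalIntegrable 0 P)
        (hcJ2.intervalIntegrable 0 P),
      hFub, intervalIntegral.integral_const_mul, ← hCg, ← hIg]
    ring
  refine ⟨hmain, ?_⟩
  intro hnn hnz
  set Z : ℝ × ℝ → ℝ := fun p => -(h₁ p + g₂ p) with hZdef
  have hZc : Continuous Z := (hh₁c.add hg₂c).neg
  have hζZ : ∀ p : ℝ × ℝ, ζ p.1 p.2 = Z p := fun p => hζ' p.1 p.2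
  set S : Set (ℝ × ℝ) := Set.Ioo 0 P ×ˢ Set.Ioo 0 Q with hSdef
  have hSmeas : MeasurableSet S := measurableSet_Ioo.prod measurableSet_Ioo
  have hφc : Continuous fun p : ℝ × ℝ => p.2 * Z p := continuous_snd.mul hZc
  have hφint : IntegrableOn (fun p : ℝ × ℝ => p.2 * Z p) S volume := by
    have hint : IntegrableOn (fun p : ℝ × ℝ => p.2 * Z p)
        (Set.Icc 0 P ×ˢ Set.Icc 0 Q) volume :=
      hφc.continuousOn.integrableOn_compact (isCompact_Icc.prod isCompact_Icc)
    exact hint.mono_set (Set.prod_mono Set.Ioo_subset_Icc_self Set.Ioo_subset_Icc_self)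
  -- rewrite the iterated integral as a set integral over S
  have heq2 : (∫ x₁ in (0:ℝ)..P, ∫ x₂ in (0:ℝ)..Q, x₂ * ζ x₁ x₂)
      = ∫ p in S, p.2 * Z p := by
    have hptw : ∀ x₁ x₂ : ℝ, x₂ * ζ x₁ x₂ = x₂ * Z (x₁, x₂) := fun a b => by rw [hζ']
    simp only [hptw]
    rw [intervalIntegral.integral_of_le hP.le, MeasureTheory.integral_Ioc_eq_integral_Ioo]
    simp only [intervalIntegral.integral_of_le hQ.le, MeasureTheory.integral_Ioc_eq_integral_Ioo]
    have hintS : IntegrableOn (fun p : ℝ × ℝ => p.2 * Z p) (Set.Ioo 0 P ×ˢ Set.Ioo 0 Q)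
        (volume.prod volume) := by
      rw [← Measure.volume_eq_prod]; exact hφint
    rw [hSdef, Measure.volume_eq_prod, setIntegral_prod _ hintS]
  -- ζ nonnegative everywhere on S
  have hZae : ∀ᵐ x ∂(volume.restrict S), 0 ≤ Z x := by
    filter_upwards [hnn] with x hx
    rw [← hζZ]; exact hx
  have hZ0 : ∀ p ∈ S, 0 ≤ Z p := by
    intro p hp
    by_contra hneg
    push_neg at hneg
    have hU : IsOpen (S ∩ Z ⁻¹' Set.Iio 0) :=
      ((isOpen_Ioo.prod isOpen_Ioo).inter (isOpen_Iio.preimage hZc))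
    have hpos := hU.measure_pos volume ⟨p, Set.mem_inter hp (Set.mem_preimage.mpr hneg)⟩
    have hnull : volume ({x | ¬ 0 ≤ Z x} ∩ S) = 0 := by
      have := ae_iff.mp hZae
      rwa [Measure.restrict_apply' hSmeas] at this
    have hsub' : (S ∩ Z ⁻¹' Set.Iio 0) ⊆ {x | ¬ 0 ≤ Z x} ∩ S :=
      fun x hx => ⟨not_le.mpr hx.2, hx.1⟩
    have : volume (S ∩ Z ⁻¹' Set.Iio 0) = 0 := measure_mono_null hsub' hnull
    exact absurd this hpos.ne'
  -- some point of S where ζ is positive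
  obtain ⟨p₀, hp₀S, hp₀ne⟩ : ∃ p₀ ∈ S, Z p₀ ≠ 0 := by
    by_contra hc
    push_neg at hc
    refine hnz ?_
    filter_upwards [ae_restrict_mem hSmeas] with x hx
    rw [hζZ]; exact hc x hx
  have hp₀pos : 0 < Z p₀ := lt_of_le_of_ne (hZ0 p₀ hp₀S) (Ne.symm hp₀ne)
  have hφp₀ : 0 < p₀.2 * Z p₀ := mul_pos hp₀S.2.1 hp₀pos
  -- positivity of the set integral
  rw [hmain, heq2]
  refine (MeasureTheory.integral_pos_iff_support_of_nonneg_ae ?_ hφint).mpr ?_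
  · filter_upwards [hZae, ae_restrict_mem hSmeas] with x h1 h2
    exact mul_nonneg h2.2.1.le h1
  · set V : Set (ℝ × ℝ) := S ∩ (fun p : ℝ × ℝ => p.2 * Z p) ⁻¹' Set.Ioi 0 with hVdef
    have hVopen : IsOpen V := (isOpen_Ioo.prod isOpen_Ioo).inter (isOpen_Ioi.preimage hφc)
    have hVpos : 0 < volume V := hVopen.measure_pos volume ⟨p₀, Set.mem_inter hp₀S (Set.mem_preimage.mpr hφp₀)⟩
    have hsub : V ⊆ Function.support fun p : ℝ × ℝ => p.2 * Z p := fun x hx => ne_of_gt hx.2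
    calc (0:ENNReal) < volume V := hVpos
      _ = volume (V ∩ S) := by rw [Set.inter_eq_left.mpr Set.inter_subset_left]
      _ = (volume.restrict S) V := (Measure.restrict_apply' hSmeas).symm
      _ ≤ (volume.restrict S) (Function.support fun p : ℝ × ℝ => p.2 * Z p) :=
          measure_mono hsub
end
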